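/- arXiv:2605.23628 — 2 statements merged into one kernel-verified Lean document; each statement's English description precedes it below -/
import Mathlib

section
/- Under upper-median aggregation, the instance-level robustness satisfies: if C ≥ Δ_med then k_median = Δ_med, and if C < Δ_med then k_median = +∞. Here N is the number of datasets on which φ⁰(A₁,D) ≥ τ, C is the number of datasets with φ⁰(A₁,D) < τ ≤ φ⁰(A₁,D) + G_D, τ is the highest upper median among competing models, and Δ_med = max(0, m − h + 1 − N) with h = ⌊m/2⌋ + 1. -/
/-!
The upper median of `m` scores is at least `τ` iff at least `m - h + 1` of the scores are at
least `τ`. Training on `S` keeps the `N` datasets already at or above `τ` there and lifts over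
`τ` exactly the datasets of `S` among the `C` reachable ones, so `A₁` is top-ranked iff
`|S ∩ C| ≥ Δ_med`. The cheapest such `S` is a `Δ_med`-subset of the reachable datasets, which
exists iff `Δ_med ≤ C`.
-/

open Finset
open scoped Classical

theorem List.SortedLE.le_getElem_iff_length_sub_le_countP {α : Type*} [LinearOrder α]
    {l : List α} (hl : l.SortedLE) {k : ℕ} (hk : k < l.length) (a : α) :
    a ≤ l[k] ↔ l.length - k ≤ l.countP (a ≤ ·) := by
  constructor
  · intro hak
    have hdrop : ∀ x ∈ l.drop k, a ≤ x := by
      intro x hx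
      obtain ⟨i, hi, rfl⟩ := List.mem_drop_iff_getElem.1 hx
      exact hak.trans (hl.getElem_le_getElem_of_le (Nat.le_add_right k i))
    calc l.length - k = (l.drop k).length := (List.length_drop ..).symm
      _ = (l.drop k).countP (a ≤ ·) := (List.countP_eq_length.2 (by simpa using hdrop)).symm
      _ ≤ l.countP (a ≤ ·) := (List.drop_sublist k l).countP_le
  · intro hcount
    by_contra! hka
    have htake : (l.take (k + 1)).countP (a ≤ ·) = 0 := by
      refine List.countP_eq_zero.2 fun x hx => ?_
      obtain ⟨i, hi, rfl⟩ := List.mem_take_iff_getElem.1 hx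
      have : l[i] ≤ l[k] := hl.getElem_le_getElem_of_le (by omega)
      simpa using this.trans_lt hka
    have hsplit := List.countP_append (p := fun x => decide (a ≤ x))
      (l₁ := l.take (k + 1)) (l₂ := l.drop (k + 1))
    rw [List.take_append_drop, htake] at hsplit
    have := List.countP_le_length (p := fun x => decide (a ≤ x)) (l := l.drop (k + 1))
    rw [List.length_drop] at this
    omega

theorem Multiset.le_getD_sort_iff {α : Type*} [LinearOrder α] {s : Multiset α} {k : ℕ}
    (hk : k < card s) (a d : α) :
    a ≤ (s.sort (· ≤ ·)).getD k d ↔ card s - k ≤ s.countP (a ≤ ·) := by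
  have hlen : (s.sort (· ≤ ·)).length = card s := s.length_sort _
  rw [List.getD_eq_getElem _ _ (hlen ▸ hk),
    (s.pairwise_sort _).sortedLE.le_getElem_iff_length_sub_le_countP _ a, hlen,
    ← Multiset.coe_countP, Multiset.sort_eq]

theorem Finset.le_getD_sort_map_univ_iff {ι α : Type*} [Fintype ι] [LinearOrder α] (f : ι → α)
    {k : ℕ} (hk : k < Fintype.card ι) (a d : α) :
    a ≤ ((univ.val.map f).sort (· ≤ ·)).getD k d ↔ Fintype.card ι - k ≤ #{i | a ≤ f i} := by
  rw [Multiset.le_getD_sort_iff (by simpa using hk), Multiset.countP_map, Multiset.card_map,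
    card_val, card_univ]
  rfl

section Boost

variable {ι α : Type*} [Fintype ι] [DecidableEq ι]
  [AddCommMonoid α] [LinearOrder α] [IsOrderedAddMonoid α]

theorem filter_le_ite_add_eq_union {f g : ι → α} (hg : ∀ i, 0 ≤ g i) (S : Finset ι) (a : α) :
    ({i | a ≤ if i ∈ S then f i + g i else f i} : Finset ι) =
      ({i | a ≤ f i} : Finset ι) ∪ S ∩ ({i | f i < a ∧ a ≤ f i + g i} : Finset ι) := by
  ext i
  by_cases hi : i ∈ S
  · have := le_add_of_nonneg_right (a := f i) (hg i)
    simp only [hi, if_true, mem_filter, mem_univ, true_and, mem_union, mem_inter]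
    constructor
    · intro ha
      exact (le_or_gt a (f i)).imp_right fun hlt => ⟨hlt, ha⟩
    · rintro (ha | ⟨-, ha⟩)
      exacts [ha.trans this, ha]
  · simp [hi]

theorem card_filter_le_ite_add {f g : ι → α} (hg : ∀ i, 0 ≤ g i) (S : Finset ι) (a : α) :
    #{i | a ≤ if i ∈ S then f i + g i else f i} =
      #{i | a ≤ f i} + #(S ∩ ({i | f i < a ∧ a ≤ f i + g i} : Finset ι)) := by
  rw [filter_le_ite_add_eq_union hg, card_union_of_disjoint]
  refine disjoint_left.2 fun i hi hi' => ?_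
  simp only [mem_filter, mem_univ, true_and, mem_inter] at hi hi'
  exact hi'.2.1.not_ge hi

end Boost

section MinCard

variable {ι : Type*} [DecidableEq ι] (C : Finset ι) (k : ℕ)

theorem sInf_card_le_card_inter_eq (hk : k ≤ #C) :
    sInf {n : ℕ∞ | ∃ S : Finset ι, (#S : ℕ∞) = n ∧ k ≤ #(S ∩ C)} = k := by
  obtain ⟨S, hSC, rfl⟩ := exists_subset_card_eq hk
  refine le_antisymm (sInf_le ⟨S, rfl, by rw [inter_eq_left.2 hSC]⟩) (le_sInf ?_)
  rintro _ ⟨T, rfl, hT⟩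
  exact_mod_cast hT.trans (card_le_card inter_subset_left)

theorem sInf_card_le_card_inter_eq_top (hk : #C < k) :
    sInf {n : ℕ∞ | ∃ S : Finset ι, (#S : ℕ∞) = n ∧ k ≤ #(S ∩ C)} = ⊤ := by
  refine sInf_eq_top.2 fun _ ⟨S, _, hS⟩ => absurd (hS.trans (card_le_card inter_subset_right)) ?_
  omega

end MinCard

theorem stmt_3_general {𝒜 : Type*} (A₁ : 𝒜) (m : ℕ) (hm : 0 < m)
    (φ0 : 𝒜 → Fin m → ℝ)
    (G : Fin m → ℝ) (hG : ∀ D, 0 ≤ G D ∧ G D ≤ 1 - φ0 A₁ D)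
    (h : ℕ) (hh : h = m / 2 + 1)
    -- the upper median: the (h-1)-indexed entry of the increasingly sorted list of scores
    (med : (Fin m → ℝ) → ℝ)
    (hmed : ∀ f : Fin m → ℝ,
      med f = ((Multiset.map f (univ : Finset (Fin m)).val).sort (· ≤ ·)).getD (h - 1) 0)
    (τ : ℝ)
    -- post-training scores of the target model after training on `S`
    (φT : Finset (Fin m) → Fin m → ℝ)
    (hφT : ∀ S D, φT S D = if D ∈ S then φ0 A₁ D + G D else φ0 A₁ D)
    (N C Δmed : ℕ)
    (hN : N = Set.ncard {D : Fin m | τ ≤ φ0 A₁ D})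
    (hC : C = Set.ncard {D : Fin m | φ0 A₁ D < τ ∧ τ ≤ φ0 A₁ D + G D})
    (hΔ : Δmed = (m - h + 1) - N) :
    (Δmed ≤ C →
      sInf {n : ℕ∞ | ∃ S : Finset (Fin m), (S.card : ℕ∞) = n ∧ τ ≤ med (φT S)}
        = (Δmed : ℕ∞)) ∧
    (C < Δmed →
      sInf {n : ℕ∞ | ∃ S : Finset (Fin m), (S.card : ℕ∞) = n ∧ τ ≤ med (φT S)} = ⊤) := by
  set reachable : Finset (Fin m) := {D | φ0 A₁ D < τ ∧ τ ≤ φ0 A₁ D + G D} with hreachable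
  rw [Set.ncard_eq_toFinset_card', Set.toFinset_ofPred] at hN hC
  have hcrit (S : Finset (Fin m)) : τ ≤ med (φT S) ↔ Δmed ≤ #(S ∩ reachable) := by
    rw [hmed, funext (hφT S), le_getD_sort_map_univ_iff _ (by rw [Fintype.card_fin]; omega),
      card_filter_le_ite_add (fun D => (hG D).1), Fintype.card_fin, hreachable]
    omega
  simp_rw [hcrit]
  exact ⟨fun hle => sInf_card_le_card_inter_eq _ Δmed (hC ▸ hle),
    fun hlt => sInf_card_le_card_inter_eq_top _ Δmed (hC ▸ hlt)⟩

/-- robustness of upper-median aggregation. The upper median of a score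
vector is the `h`-th smallest value (`h = ⌊m/2⌋ + 1`), obtained from the sorted list of
scores. -/
theorem stmt_3 {𝒜 : Type*} [Fintype 𝒜] (A₁ : 𝒜) (m : ℕ) (hm : 0 < m)
    (φ0 : 𝒜 → Fin m → ℝ) (hφ0 : ∀ A D, 0 ≤ φ0 A D ∧ φ0 A D ≤ 1)
    (G : Fin m → ℝ) (hG : ∀ D, 0 ≤ G D ∧ G D ≤ 1 - φ0 A₁ D)
    (h : ℕ) (hh : h = m / 2 + 1)
    -- the upper median: the (h-1)-indexed entry of the increasingly sorted list of scores
    (med : (Fin m → ℝ) → ℝ)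
    (hmed : ∀ f : Fin m → ℝ,
      med f = ((Multiset.map f (univ : Finset (Fin m)).val).sort (· ≤ ·)).getD (h - 1) 0)
    -- the highest upper median among competing models
    (hcomp : ((univ : Finset 𝒜).erase A₁).Nonempty)
    (τ : ℝ) (hτ : τ = (univ.erase A₁).sup' hcomp (fun A => med (φ0 A)))
    -- post-training scores of the target model after training on `S`
    (φT : Finset (Fin m) → Fin m → ℝ)
    (hφT : ∀ S D, φT S D = if D ∈ S then φ0 A₁ D + G D else φ0 A₁ D)
    (N C Δmed : ℕ)
    (hN : N = Set.ncard {D : Fin m | τ ≤ φ0 A₁ D})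
    (hC : C = Set.ncard {D : Fin m | φ0 A₁ D < τ ∧ τ ≤ φ0 A₁ D + G D})
    (hΔ : Δmed = (m - h + 1) - N) :
    (Δmed ≤ C →
      sInf {n : ℕ∞ | ∃ S : Finset (Fin m), (S.card : ℕ∞) = n ∧ τ ≤ med (φT S)}
        = (Δmed : ℕ∞)) ∧
    (C < Δmed →
      sInf {n : ℕ∞ | ∃ S : Finset (Fin m), (S.card : ℕ∞) = n ∧ τ ≤ med (φT S)} = ⊤) :=
  stmt_3_general A₁ m hm φ0 G hG h hh med hmed τ φT hφT N C Δmed hN hC hΔ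
end

section
/- Under strict dataset rankings (each dataset induces a strict total order on the n models), the ranking by mean win rate coincides with the ranking by Borda score: for all models A, A', w(φ,A) ≥ w(φ,A') if and only if BordaScore(A) ≥ BordaScore(A'), where BordaScore(A) = Σ_D (n − rank_D(A)) with rank_D(A) ∈ {1,...,n} the position of A in the strict order of dataset D. -/
open Finset
open scoped Classical

/-!
For an injective score `f`, the models scoring at most `f a` and those scoring at least `f a`
cover everything and overlap only in `a`, so the win count of `a` is `n - rank a + 1`.
Summing over datasets, `n * m * w A = borda A + m`, an increasing affine function of the
Borda score.
-/

section StrictRanking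

variable {α β : Type*} [Fintype α] [LinearOrder β] {f : α → β}

theorem ncard_le_add_ncard_ge_of_injective (hf : Function.Injective f) (a : α) :
    {x | f x ≤ f a}.ncard + {x | f a ≤ f x}.ncard = Fintype.card α + 1 := by
  have hunion : {x | f x ≤ f a} ∪ {x | f a ≤ f x} = Set.univ := by
    ext x
    simp [le_total]
  have hinter : {x | f x ≤ f a} ∩ {x | f a ≤ f x} = {a} := by
    ext x
    simp only [Set.mem_inter_iff, Set.mem_ofPred_eq, Set.mem_singleton_iff]
    exact ⟨fun h => hf (le_antisymm h.1 h.2), by rintro rfl; exact ⟨le_rfl, le_rfl⟩⟩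
  have := Set.ncard_union_add_ncard_inter {x | f x ≤ f a} {x | f a ≤ f x}
  rw [hunion, hinter, Set.ncard_univ, Set.ncard_singleton, Nat.card_eq_fintype_card] at this
  exact this.symm

theorem ncard_le_eq_card_sub_ncard_ge_add_one (hf : Function.Injective f) (a : α) :
    {x | f x ≤ f a}.ncard = Fintype.card α - {x | f a ≤ f x}.ncard + 1 := by
  have hsum := ncard_le_add_ncard_ge_of_injective hf a
  have hpos : 0 < {x | f x ≤ f a}.ncard := (Set.ncard_pos (Set.toFinite _)).mpr ⟨a, le_rfl⟩
  omega

end StrictRanking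

/-- under strict dataset rankings, mean win rate and Borda score induce the
same ranking of models. `rank_D(A) = |{A' : φ(A',D) ≥ φ(A,D)}|` is the position of `A`
in the strict order of dataset `D` (the top model has rank 1). -/
theorem stmt_14 {𝒜 : Type*} [Fintype 𝒜] (n m : ℕ)
    (hn : n = Fintype.card 𝒜) (hn1 : 1 ≤ n) (hm : 1 ≤ m)
    (φ : 𝒜 → Fin m → ℝ)
    (hstrict : ∀ D : Fin m, Function.Injective (fun A => φ A D))
    (wD : Fin m → 𝒜 → ℝ)
    (hwD : ∀ D A, wD D A = (1 / (n : ℝ)) * Set.ncard {A' : 𝒜 | φ A' D ≤ φ A D})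
    (w : 𝒜 → ℝ) (hw : ∀ A, w A = (1 / (m : ℝ)) * ∑ D, wD D A)
    (rank : Fin m → 𝒜 → ℕ)
    (hrank : ∀ D A, rank D A = Set.ncard {A' : 𝒜 | φ A D ≤ φ A' D})
    (borda : 𝒜 → ℕ) (hborda : ∀ A, borda A = ∑ D, (n - rank D A)) :
    ∀ A A' : 𝒜, w A' ≤ w A ↔ borda A' ≤ borda A := by
  have hwins : ∀ A, ∑ D, Set.ncard {A' : 𝒜 | φ A' D ≤ φ A D} = borda A + m := fun A => by
    simp only [hborda, hrank, hn, ncard_le_eq_card_sub_ncard_ge_add_one (hstrict _),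
      sum_add_distrib, sum_const, card_univ, Fintype.card_fin, smul_eq_mul, mul_one]
  have hw_eq : ∀ A, w A = ((borda A : ℝ) + m) / (n * m) := fun A => by
    simp only [hw, hwD, ← mul_sum, ← Nat.cast_sum, hwins]
    push_cast
    ring
  have hnm : (0 : ℝ) < n * m := by positivity
  intro A A'
  rw [hw_eq, hw_eq, div_le_div_iff_of_pos_right hnm, add_le_add_iff_right, Nat.cast_le]
end
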